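/- arXiv:2509.19911 — 3 statements merged into one kernel-verified Lean document; each statement's English description precedes it below -/
import Mathlib

section
/- Let U₁ : Matrix (Fin N₁) (Fin r₁) ℝ and U₂ : Matrix (Fin N₂) (Fin r₂) ℝ. Then the null space of the transposed Kronecker product, LinearMap.ker ((U₂ ⊗ U₁)ᵀ.mulVecLin), equals the sum of the three submodules N(U₂ᵀ) ⊗ C(U₁), C(U₂) ⊗ N(U₁ᵀ), and N(U₂ᵀ) ⊗ N(U₁ᵀ) of (Fin N₂ × Fin N₁ → ℝ), and these three submodules are independent (i.e., the sum is an internal direct sum). -/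
open Matrix Kronecker

/-- The Kronecker product of two submodules `V ⊆ (m → ℝ)` and `W ⊆ (p → ℝ)`:
the submodule of `(m × p → ℝ)` spanned by vectors `(j, i) ↦ v j * w i`
with `v ∈ V`, `w ∈ W`. -/
def Submodule.kron {m p : Type*} (V : Submodule ℝ (m → ℝ)) (W : Submodule ℝ (p → ℝ)) :
    Submodule ℝ (m × p → ℝ) :=
  Submodule.span ℝ {z | ∃ v ∈ V, ∃ w ∈ W, z = fun ji => v ji.1 * w ji.2}

namespace KronAux
variable {m p : Type*}

noncomputable def kB : (m → ℝ) →ₗ[ℝ] (p → ℝ) →ₗ[ℝ] (m × p → ℝ) :=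
  LinearMap.mk₂ ℝ (fun v w ji => v ji.1 * w ji.2)
    (fun v v' w => by funext ji; simp [add_mul])
    (fun c v w => by funext ji; simp [mul_assoc])
    (fun v w w' => by funext ji; simp [mul_add])
    (fun c v w => by funext ji; simp; ring)

lemma kron_eq_map₂ (V : Submodule ℝ (m → ℝ)) (W : Submodule ℝ (p → ℝ)) :
    V.kron W = Submodule.map₂ kB V W := by
  rw [Submodule.map₂_eq_span_image2, Submodule.kron]
  congr 1
  ext z
  constructor
  · rintro ⟨v, hv, w, hw, rfl⟩; exact ⟨v, hv, w, hw, rfl⟩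
  · rintro ⟨v, hv, w, hw, rfl⟩; exact ⟨v, hv, w, hw, rfl⟩

lemma kron_span_span (s : Set (m → ℝ)) (t : Set (p → ℝ)) :
    (Submodule.span ℝ s).kron (Submodule.span ℝ t) =
      Submodule.span ℝ (Set.image2 (fun v w => kB v w) s t) := by
  rw [kron_eq_map₂, Submodule.map₂_span_span]

end KronAux

namespace KronAux

lemma mulVec_kron {N₁ N₂ r₁ r₂ : ℕ}
    (U₁ : Matrix (Fin N₁) (Fin r₁) ℝ) (U₂ : Matrix (Fin N₂) (Fin r₂) ℝ)
    (v : Fin N₂ → ℝ) (w : Fin N₁ → ℝ) :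
    (U₂ ⊗ₖ U₁)ᵀ.mulVecLin (kB v w) = kB (U₂ᵀ.mulVec v) (U₁ᵀ.mulVec w) := by
  funext lk
  obtain ⟨l, k⟩ := lk
  simp only [mulVecLin_apply, mulVec, dotProduct, transpose_apply, kroneckerMap_apply, kB,
    LinearMap.mk₂_apply, Fintype.sum_prod_type]
  rw [Finset.sum_mul_sum]
  apply Finset.sum_congr rfl
  intro j _
  apply Finset.sum_congr rfl
  intro i _
  ring

end KronAux

namespace KronAux

lemma disjoint_range_ker {N r : ℕ} (U : Matrix (Fin N) (Fin r) ℝ) :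
    Disjoint (LinearMap.range U.mulVecLin) (LinearMap.ker Uᵀ.mulVecLin) := by
  rw [Submodule.disjoint_def]
  rintro v ⟨x, rfl⟩ hker
  simp only [LinearMap.mem_ker, mulVecLin_apply] at hker
  rw [mulVec_transpose] at hker
  have h : U.mulVec x ⬝ᵥ U.mulVec x = 0 := by
    rw [dotProduct_mulVec, hker, zero_dotProduct]
  rwa [dotProduct_self_eq_zero] at h

lemma sup_range_ker {N r : ℕ} (U : Matrix (Fin N) (Fin r) ℝ) :
    (LinearMap.range U.mulVecLin) ⊔ (LinearMap.ker Uᵀ.mulVecLin) = ⊤ := by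
  apply Submodule.eq_top_of_finrank_eq
  have h1 : Module.finrank ℝ (LinearMap.range U.mulVecLin ⊔ LinearMap.ker Uᵀ.mulVecLin :
      Submodule ℝ (Fin N → ℝ)) =
      Module.finrank ℝ (LinearMap.range U.mulVecLin) +
        Module.finrank ℝ (LinearMap.ker Uᵀ.mulVecLin) := by
    have := Submodule.finrank_sup_add_finrank_inf_eq
      (LinearMap.range U.mulVecLin) (LinearMap.ker Uᵀ.mulVecLin)
    rwa [(disjoint_range_ker U).eq_bot, finrank_bot, add_zero] at this
  have h2 := LinearMap.finrank_range_add_finrank_ker Uᵀ.mulVecLin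
  have h3 : Module.finrank ℝ (LinearMap.range U.mulVecLin) =
      Module.finrank ℝ (LinearMap.range Uᵀ.mulVecLin) := by
    have := Matrix.rank_transpose U
    simpa [Matrix.rank] using this.symm
  rw [h1, h3, h2]

end KronAux

namespace KronAux
variable {m p : Type*}

lemma tensor_li {ι κ : Type*} [Fintype ι] [Fintype κ]
    {f : ι → (m → ℝ)} {g : κ → (p → ℝ)}
    (hf : LinearIndependent ℝ f) (hg : LinearIndependent ℝ g) :
    LinearIndependent ℝ (fun ac : ι × κ => (kB (f ac.1) (g ac.2) : m × p → ℝ)) := by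
  rw [Fintype.linearIndependent_iff]
  intro α h
  have key : ∀ j i, ∑ c, ∑ a, α (a, c) * f a j * g c i = 0 := by
    intro j i
    have h0 := congrFun h (j, i)
    simp only [Finset.sum_apply, Pi.smul_apply, smul_eq_mul, Pi.zero_apply, kB,
      LinearMap.mk₂_apply] at h0
    rw [Fintype.sum_prod_type, Finset.sum_comm] at h0
    simpa [mul_assoc] using h0
  have h3 : ∀ j c, ∑ a, α (a, c) * f a j = 0 := by
    intro j
    apply Fintype.linearIndependent_iff.mp hg (fun c => ∑ a, α (a, c) * f a j)
    funext i
    simp only [Finset.sum_apply, Pi.smul_apply, smul_eq_mul, Pi.zero_apply, Finset.sum_mul]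
    exact key j i
  rintro ⟨a, c⟩
  apply Fintype.linearIndependent_iff.mp hf (fun a => α (a, c))
  funext j
  simp only [Finset.sum_apply, Pi.smul_apply, smul_eq_mul, Pi.zero_apply]
  exact h3 j c

lemma kron_top_top [Fintype m] [Fintype p] [DecidableEq m] [DecidableEq p] :
    (⊤ : Submodule ℝ (m → ℝ)).kron (⊤ : Submodule ℝ (p → ℝ)) = ⊤ := by
  rw [eq_top_iff, ← (Pi.basisFun ℝ (m × p)).span_eq, Submodule.span_le]
  rintro z ⟨ji, rfl⟩
  obtain ⟨j, i⟩ := ji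
  have hz : (Pi.basisFun ℝ (m × p)) (j, i) =
      (fun lk : m × p => (Pi.single j (1:ℝ) : m → ℝ) lk.1 * (Pi.single i (1:ℝ) : p → ℝ) lk.2) := by
    funext lk
    obtain ⟨l, k⟩ := lk
    simp [Pi.single_apply, Prod.ext_iff, ite_and]
    split_ifs <;> simp_all
  rw [hz]
  exact Submodule.subset_span ⟨Pi.single j 1, trivial, Pi.single i 1, trivial, rfl⟩

end KronAux

namespace KronAux

lemma sub_family {n : Type*} [Fintype n] (V : Submodule ℝ (n → ℝ)) :
    ∃ (k : ℕ) (b : Fin k → (n → ℝ)), LinearIndependent ℝ b ∧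
      Submodule.span ℝ (Set.range b) = V := by
  obtain b := Module.finBasis ℝ V
  refine ⟨Module.finrank ℝ V, fun i => (b i : n → ℝ), ?_, ?_⟩
  · exact b.linearIndependent.map' V.subtype V.ker_subtype
  · have : Set.range (fun i => (b i : n → ℝ)) = V.subtype '' (Set.range b) := by
      rw [← Set.range_comp]; rfl
    rw [this, ← Submodule.map_span, b.span_eq, Submodule.map_subtype_top]

lemma image2_range {α β γ δ ε : Type*} (f : α → β → γ) (g : δ → α) (h : ε → β) :
    Set.image2 f (Set.range g) (Set.range h) =
      Set.range (fun de : δ × ε => f (g de.1) (h de.2)) := by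
  ext x
  simp only [Set.mem_image2, Set.mem_range, Prod.exists]
  constructor
  · rintro ⟨a, ⟨d, rfl⟩, b, ⟨e, rfl⟩, rfl⟩; exact ⟨d, e, rfl⟩
  · rintro ⟨d, e, rfl⟩; exact ⟨g d, ⟨d, rfl⟩, h e, ⟨e, rfl⟩, rfl⟩

lemma kron_le_ker {N₁ N₂ r₁ r₂ : ℕ}
    (U₁ : Matrix (Fin N₁) (Fin r₁) ℝ) (U₂ : Matrix (Fin N₂) (Fin r₂) ℝ)
    {V : Submodule ℝ (Fin N₂ → ℝ)} {W : Submodule ℝ (Fin N₁ → ℝ)}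
    (hVW : ∀ v ∈ V, ∀ w ∈ W, U₂ᵀ.mulVec v = 0 ∨ U₁ᵀ.mulVec w = 0) :
    V.kron W ≤ LinearMap.ker ((U₂ ⊗ₖ U₁)ᵀ.mulVecLin) := by
  rw [Submodule.kron, Submodule.span_le]
  rintro z ⟨v, hv, w, hw, rfl⟩
  have hz : (fun ji : Fin N₂ × Fin N₁ => v ji.1 * w ji.2) = kB v w := rfl
  rw [SetLike.mem_coe, LinearMap.mem_ker, hz, mulVec_kron]
  rcases hVW v hv w hw with h | h <;> rw [h]
  · exact LinearMap.map_zero₂ kB _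
  · exact (kB _).map_zero

end KronAux

namespace KronAux

lemma kron_sup_left {m p : Type*} (V₁ V₂ : Submodule ℝ (m → ℝ)) (W : Submodule ℝ (p → ℝ)) :
    (V₁ ⊔ V₂).kron W = V₁.kron W ⊔ V₂.kron W := by
  simp_rw [kron_eq_map₂]; exact Submodule.map₂_sup_left _ _ _ _

lemma kron_sup_right {m p : Type*} (V : Submodule ℝ (m → ℝ)) (W₁ W₂ : Submodule ℝ (p → ℝ)) :
    V.kron (W₁ ⊔ W₂) = V.kron W₁ ⊔ V.kron W₂ := by
  simp_rw [kron_eq_map₂]; exact Submodule.map₂_sup_right _ _ _ _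

lemma kron_span_range {m p : Type*} {k l : ℕ} (b : Fin k → (m → ℝ)) (c : Fin l → (p → ℝ)) :
    (Submodule.span ℝ (Set.range b)).kron (Submodule.span ℝ (Set.range c)) =
      Submodule.span ℝ (Set.range fun ac : Fin k × Fin l => (kB (b ac.1) (c ac.2) : m × p → ℝ)) := by
  rw [kron_span_span, image2_range]

end KronAux


open KronAux in
set_option maxHeartbeats 2000000 in
theorem stmt0 {N₁ N₂ r₁ r₂ : ℕ}
    (U₁ : Matrix (Fin N₁) (Fin r₁) ℝ) (U₂ : Matrix (Fin N₂) (Fin r₂) ℝ) :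
    LinearMap.ker ((U₂ ⊗ₖ U₁)ᵀ.mulVecLin) =
      (LinearMap.ker U₂ᵀ.mulVecLin).kron (LinearMap.range U₁.mulVecLin) ⊔
        (LinearMap.range U₂.mulVecLin).kron (LinearMap.ker U₁ᵀ.mulVecLin) ⊔
        (LinearMap.ker U₂ᵀ.mulVecLin).kron (LinearMap.ker U₁ᵀ.mulVecLin) ∧
    iSupIndep
      ![(LinearMap.ker U₂ᵀ.mulVecLin).kron (LinearMap.range U₁.mulVecLin),
        (LinearMap.range U₂.mulVecLin).kron (LinearMap.ker U₁ᵀ.mulVecLin),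
        (LinearMap.ker U₂ᵀ.mulVecLin).kron (LinearMap.ker U₁ᵀ.mulVecLin)] := by
  obtain ⟨kc₂, bC₂, liC₂, spC₂⟩ := sub_family (LinearMap.range U₂.mulVecLin)
  obtain ⟨kn₂, bN₂, liN₂, spN₂⟩ := sub_family (LinearMap.ker U₂ᵀ.mulVecLin)
  obtain ⟨kc₁, bC₁, liC₁, spC₁⟩ := sub_family (LinearMap.range U₁.mulVecLin)
  obtain ⟨kn₁, bN₁, liN₁, spN₁⟩ := sub_family (LinearMap.ker U₁ᵀ.mulVecLin)
  have li₂ : LinearIndependent ℝ (Sum.elim bC₂ bN₂) :=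
    liC₂.sum_type liN₂ (by rw [spC₂, spN₂]; exact disjoint_range_ker U₂)
  have li₁ : LinearIndependent ℝ (Sum.elim bC₁ bN₁) :=
    liC₁.sum_type liN₁ (by rw [spC₁, spN₁]; exact disjoint_range_ker U₁)
  set F : ((Fin kc₂ ⊕ Fin kn₂) × (Fin kc₁ ⊕ Fin kn₁)) → (Fin N₂ × Fin N₁ → ℝ) :=
    fun ac => kB (Sum.elim bC₂ bN₂ ac.1) (Sum.elim bC₁ bN₁ ac.2) with hF
  have liF : LinearIndependent ℝ F := tensor_li li₂ li₁
  set eCC : Fin kc₂ × Fin kc₁ → ((Fin kc₂ ⊕ Fin kn₂) × (Fin kc₁ ⊕ Fin kn₁)) :=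
    fun ac => (Sum.inl ac.1, Sum.inl ac.2) with heCC
  set eNC : Fin kn₂ × Fin kc₁ → ((Fin kc₂ ⊕ Fin kn₂) × (Fin kc₁ ⊕ Fin kn₁)) :=
    fun ac => (Sum.inr ac.1, Sum.inl ac.2) with heNC
  set eCN : Fin kc₂ × Fin kn₁ → ((Fin kc₂ ⊕ Fin kn₂) × (Fin kc₁ ⊕ Fin kn₁)) :=
    fun ac => (Sum.inl ac.1, Sum.inr ac.2) with heCN
  set eNN : Fin kn₂ × Fin kn₁ → ((Fin kc₂ ⊕ Fin kn₂) × (Fin kc₁ ⊕ Fin kn₁)) :=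
    fun ac => (Sum.inr ac.1, Sum.inr ac.2) with heNN
  have hNC : (LinearMap.ker U₂ᵀ.mulVecLin).kron (LinearMap.range U₁.mulVecLin) =
      Submodule.span ℝ (F '' Set.range eNC) := by
    rw [← spN₂, ← spC₁, kron_span_range, ← Set.range_comp]; rfl
  have hCN : (LinearMap.range U₂.mulVecLin).kron (LinearMap.ker U₁ᵀ.mulVecLin) =
      Submodule.span ℝ (F '' Set.range eCN) := by
    rw [← spC₂, ← spN₁, kron_span_range, ← Set.range_comp]; rfl
  have hNN : (LinearMap.ker U₂ᵀ.mulVecLin).kron (LinearMap.ker U₁ᵀ.mulVecLin) =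
      Submodule.span ℝ (F '' Set.range eNN) := by
    rw [← spN₂, ← spN₁, kron_span_range, ← Set.range_comp]; rfl
  -- the CC piece kills the kernel
  have hCCker : ∀ a ∈ (LinearMap.range U₂.mulVecLin).kron (LinearMap.range U₁.mulVecLin),
      a ∈ LinearMap.ker ((U₂ ⊗ₖ U₁)ᵀ.mulVecLin) → a = 0 := by
    intro a ha hker
    rw [← spC₂, ← spC₁, kron_span_range] at ha
    obtain ⟨α, hα⟩ := (Submodule.mem_span_range_iff_exists_fun ℝ).mp ha
    have liG : LinearIndependent ℝ
        (fun ac : Fin kc₂ × Fin kc₁ =>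
          (kB (U₂ᵀ.mulVecLin (bC₂ ac.1)) (U₁ᵀ.mulVecLin (bC₁ ac.2)) : Fin r₂ × Fin r₁ → ℝ)) := by
      have m2 : LinearIndependent ℝ (fun a => U₂ᵀ.mulVecLin (bC₂ a)) :=
        liC₂.map (f := U₂ᵀ.mulVecLin) (by rw [spC₂]; exact disjoint_range_ker U₂)
      have m1 : LinearIndependent ℝ (fun c => U₁ᵀ.mulVecLin (bC₁ c)) :=
        liC₁.map (f := U₁ᵀ.mulVecLin) (by rw [spC₁]; exact disjoint_range_ker U₁)
      exact tensor_li (f := fun a => U₂ᵀ.mulVecLin (bC₂ a)) (g := fun c => U₁ᵀ.mulVecLin (bC₁ c)) m2 m1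
    have h0 : ∑ ac : Fin kc₂ × Fin kc₁,
        α ac • (kB (U₂ᵀ.mulVecLin (bC₂ ac.1)) (U₁ᵀ.mulVecLin (bC₁ ac.2)) : Fin r₂ × Fin r₁ → ℝ)
        = 0 := by
      rw [LinearMap.mem_ker, ← hα, map_sum] at hker
      simp only [LinearMap.map_smul, mulVec_kron] at hker
      exact hker
    have hz := Fintype.linearIndependent_iff.mp liG α h0
    rw [← hα]
    exact Finset.sum_eq_zero fun ac _ => by rw [hz ac, zero_smul]
  have hle1 : (LinearMap.ker U₂ᵀ.mulVecLin).kron (LinearMap.range U₁.mulVecLin) ≤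
      LinearMap.ker ((U₂ ⊗ₖ U₁)ᵀ.mulVecLin) :=
    kron_le_ker U₁ U₂ fun v hv w _ => Or.inl hv
  have hle2 : (LinearMap.range U₂.mulVecLin).kron (LinearMap.ker U₁ᵀ.mulVecLin) ≤
      LinearMap.ker ((U₂ ⊗ₖ U₁)ᵀ.mulVecLin) :=
    kron_le_ker U₁ U₂ fun v _ w hw => Or.inr hw
  have hle3 : (LinearMap.ker U₂ᵀ.mulVecLin).kron (LinearMap.ker U₁ᵀ.mulVecLin) ≤
      LinearMap.ker ((U₂ ⊗ₖ U₁)ᵀ.mulVecLin) :=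
    kron_le_ker U₁ U₂ fun v hv w _ => Or.inl hv
  have hdecomp : ((LinearMap.range U₂.mulVecLin).kron (LinearMap.range U₁.mulVecLin) ⊔
        (LinearMap.range U₂.mulVecLin).kron (LinearMap.ker U₁ᵀ.mulVecLin)) ⊔
      ((LinearMap.ker U₂ᵀ.mulVecLin).kron (LinearMap.range U₁.mulVecLin) ⊔
        (LinearMap.ker U₂ᵀ.mulVecLin).kron (LinearMap.ker U₁ᵀ.mulVecLin)) = ⊤ := by
    rw [← kron_top_top, ← sup_range_ker U₂, ← sup_range_ker U₁,
      kron_sup_left, kron_sup_right, kron_sup_right]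
  constructor
  · apply le_antisymm
    · intro z hz
      have hz4 : z ∈ ((LinearMap.range U₂.mulVecLin).kron (LinearMap.range U₁.mulVecLin) ⊔
          (LinearMap.range U₂.mulVecLin).kron (LinearMap.ker U₁ᵀ.mulVecLin)) ⊔
          ((LinearMap.ker U₂ᵀ.mulVecLin).kron (LinearMap.range U₁.mulVecLin) ⊔
          (LinearMap.ker U₂ᵀ.mulVecLin).kron (LinearMap.ker U₁ᵀ.mulVecLin)) := by
        rw [hdecomp]; trivial
      obtain ⟨x, hx, y, hy, rfl⟩ := Submodule.mem_sup.mp hz4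
      obtain ⟨a, ha, b, hb, rfl⟩ := Submodule.mem_sup.mp hx
      obtain ⟨c, hc, d, hd, rfl⟩ := Submodule.mem_sup.mp hy
      have hbS : b + (c + d) ∈ (LinearMap.ker U₂ᵀ.mulVecLin).kron (LinearMap.range U₁.mulVecLin) ⊔
          (LinearMap.range U₂.mulVecLin).kron (LinearMap.ker U₁ᵀ.mulVecLin) ⊔
          (LinearMap.ker U₂ᵀ.mulVecLin).kron (LinearMap.ker U₁ᵀ.mulVecLin) := by
        refine Submodule.add_mem _ ?_ (Submodule.add_mem _ ?_ ?_)
        · exact Submodule.mem_sup_left (Submodule.mem_sup_right hb)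
        · exact Submodule.mem_sup_left (Submodule.mem_sup_left hc)
        · exact Submodule.mem_sup_right hd
      have hbker : b + (c + d) ∈ LinearMap.ker ((U₂ ⊗ₖ U₁)ᵀ.mulVecLin) :=
        sup_le (sup_le hle1 hle2) hle3 hbS
      have ha0 : a = 0 := by
        apply hCCker a ha
        have : a = (a + b + (c + d)) - (b + (c + d)) := by ring
        rw [this]
        exact Submodule.sub_mem _ hz hbker
      rw [ha0, zero_add]
      exact hbS
    · exact sup_le (sup_le hle1 hle2) hle3
  · intro i
    have dj : ∀ (s t : Set ((Fin kc₂ ⊕ Fin kn₂) × (Fin kc₁ ⊕ Fin kn₁))),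
        Disjoint s t → Disjoint (Submodule.span ℝ (F '' s)) (Submodule.span ℝ (F '' t)) :=
      fun s t h => liF.disjoint_span_image h
    have dNC : Disjoint (Set.range eNC) (Set.range eCN ∪ Set.range eNN) := by
      rw [Set.disjoint_left]
      rintro _ ⟨ac, rfl⟩ (⟨bd, h⟩ | ⟨bd, h⟩) <;> simp [heNC, heCN, heNN, Prod.ext_iff] at h
    have dCN : Disjoint (Set.range eCN) (Set.range eNC ∪ Set.range eNN) := by
      rw [Set.disjoint_left]
      rintro _ ⟨ac, rfl⟩ (⟨bd, h⟩ | ⟨bd, h⟩) <;> simp [heNC, heCN, heNN, Prod.ext_iff] at h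
    have dNN : Disjoint (Set.range eNN) (Set.range eNC ∪ Set.range eCN) := by
      rw [Set.disjoint_left]
      rintro _ ⟨ac, rfl⟩ (⟨bd, h⟩ | ⟨bd, h⟩) <;> simp [heNC, heCN, heNN, Prod.ext_iff] at h
    fin_cases i
    · simp only [Matrix.cons_val_zero]
      rw [hNC]
      refine Disjoint.mono_right ?_ (dj _ _ dNC)
      apply iSup_le; intro j; apply iSup_le; intro hj
      fin_cases j
      · exact absurd rfl hj
      · simp only [Matrix.cons_val_one, Matrix.head_cons]
        rw [hCN]
        exact Submodule.span_mono (Set.image_mono Set.subset_union_left)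
      · simp only [Matrix.cons_val_two, Matrix.tail_cons, Matrix.head_cons]
        rw [hNN]
        exact Submodule.span_mono (Set.image_mono Set.subset_union_right)
    · simp only [Matrix.cons_val_one, Matrix.head_cons]
      rw [hCN]
      refine Disjoint.mono_right ?_ (dj _ _ dCN)
      apply iSup_le; intro j; apply iSup_le; intro hj
      fin_cases j
      · simp only [Matrix.cons_val_zero]
        rw [hNC]
        exact Submodule.span_mono (Set.image_mono Set.subset_union_left)
      · exact absurd rfl hj
      · simp only [Matrix.cons_val_two, Matrix.tail_cons, Matrix.head_cons]
        rw [hNN]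
        exact Submodule.span_mono (Set.image_mono Set.subset_union_right)
    · simp only [Matrix.cons_val_two, Matrix.tail_cons, Matrix.head_cons]
      rw [hNN]
      refine Disjoint.mono_right ?_ (dj _ _ dNN)
      apply iSup_le; intro j; apply iSup_le; intro hj
      fin_cases j
      · simp only [Matrix.cons_val_zero]
        rw [hNC]
        exact Submodule.span_mono (Set.image_mono Set.subset_union_left)
      · simp only [Matrix.cons_val_one, Matrix.head_cons]
        rw [hCN]
        exact Submodule.span_mono (Set.image_mono Set.subset_union_right)
      · exact absurd rfl hj
end

section
/- Let U₁ : Matrix (Fin N₁) (Fin r₁) ℝ and U₂ : Matrix (Fin N₂) (Fin r₂) ℝ. Then the four submodules C(U₂) ⊗ C(U₁), C(U₂) ⊗ N(U₁ᵀ), N(U₂ᵀ) ⊗ C(U₁), and N(U₂ᵀ) ⊗ N(U₁ᵀ) of (Fin N₂ × Fin N₁ → ℝ) are independent and their sum is the whole space (Fin N₂ × Fin N₁ → ℝ), i.e., they furnish an internal direct sum decomposition of ℝ^{N₂N₁}. -/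
open Matrix Kronecker

lemma dot_range_ker {N r : ℕ} (M : Matrix (Fin N) (Fin r) ℝ)
    {v w : Fin N → ℝ} (hv : v ∈ LinearMap.range M.mulVecLin)
    (hw : w ∈ LinearMap.ker Mᵀ.mulVecLin) : v ⬝ᵥ w = 0 := by
  obtain ⟨x, rfl⟩ := hv
  have hw' : Mᵀ *ᵥ w = 0 := hw
  rw [Matrix.mulVecLin_apply, dotProduct_comm, Matrix.dotProduct_mulVec,
    ← Matrix.mulVec_transpose, hw', zero_dotProduct]

lemma disjoint_range_ker {N r : ℕ} (M : Matrix (Fin N) (Fin r) ℝ) :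
    Disjoint (LinearMap.range M.mulVecLin) (LinearMap.ker Mᵀ.mulVecLin) := by
  rw [Submodule.disjoint_def]
  intro x hx hx'
  exact dotProduct_self_eq_zero.mp (dot_range_ker M hx hx')

lemma sup_range_ker {N r : ℕ} (M : Matrix (Fin N) (Fin r) ℝ) :
    LinearMap.range M.mulVecLin ⊔ LinearMap.ker Mᵀ.mulVecLin = ⊤ := by
  apply Submodule.eq_top_of_finrank_eq
  have h1 := Submodule.finrank_sup_add_finrank_inf_eq
    (LinearMap.range M.mulVecLin) (LinearMap.ker Mᵀ.mulVecLin)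
  rw [(disjoint_range_ker M).eq_bot, finrank_bot, add_zero] at h1
  have h2 := LinearMap.finrank_range_add_finrank_ker Mᵀ.mulVecLin
  have h3 : Mᵀ.rank = M.rank := Matrix.rank_transpose M
  have hr : Module.finrank ℝ (LinearMap.range M.mulVecLin) = M.rank := rfl
  have hr' : Module.finrank ℝ (LinearMap.range Mᵀ.mulVecLin) = Mᵀ.rank := rfl
  rw [Module.finrank_fin_fun] at h2 ⊢
  omega

/-- Pure tensors belong to the Kronecker product. -/
lemma mem_kron {m p : Type*} {V : Submodule ℝ (m → ℝ)} {W : Submodule ℝ (p → ℝ)}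
    {v : m → ℝ} {w : p → ℝ} (hv : v ∈ V) (hw : w ∈ W) :
    (fun ji : m × p => v ji.1 * w ji.2) ∈ V.kron W :=
  Submodule.subset_span ⟨v, hv, w, hw, rfl⟩

lemma kron_dot_zero {m p : Type*} [Fintype m] [Fintype p]
    (V V' : Submodule ℝ (m → ℝ)) (W W' : Submodule ℝ (p → ℝ))
    (h : (∀ v ∈ V, ∀ v' ∈ V', v ⬝ᵥ v' = 0) ∨ (∀ w ∈ W, ∀ w' ∈ W', w ⬝ᵥ w' = 0)) :
    ∀ x ∈ V.kron W, ∀ y ∈ V'.kron W', x ⬝ᵥ y = 0 := by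
  intro x hx
  induction hx using Submodule.span_induction with
  | mem x hx =>
    obtain ⟨v, hv, w, hw, rfl⟩ := hx
    intro y hy
    induction hy using Submodule.span_induction with
    | mem y hy =>
      obtain ⟨v', hv', w', hw', rfl⟩ := hy
      have : (fun ji : m × p => v ji.1 * w ji.2) ⬝ᵥ (fun ji : m × p => v' ji.1 * w' ji.2)
          = (v ⬝ᵥ v') * (w ⬝ᵥ w') := by
        simp only [dotProduct, Finset.sum_mul_sum, Fintype.sum_prod_type]
        exact Finset.sum_congr rfl fun a _ => Finset.sum_congr rfl fun b _ => by ring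
      rw [this]
      rcases h with h | h
      · rw [h v hv v' hv', zero_mul]
      · rw [h w hw w' hw', mul_zero]
    | zero => simp
    | add y z _ _ hy hz => rw [dotProduct_add, hy, hz, add_zero]
    | smul c y _ hy => rw [dotProduct_smul, hy, smul_zero]
  | zero => intro y _; simp
  | add x z _ _ hx hz => intro y hy; rw [add_dotProduct, hx y hy, hz y hy, add_zero]
  | smul c x _ hx => intro y hy; rw [smul_dotProduct, hx y hy, smul_zero]

theorem stmt2 {N₁ N₂ r₁ r₂ : ℕ}
    (U₁ : Matrix (Fin N₁) (Fin r₁) ℝ) (U₂ : Matrix (Fin N₂) (Fin r₂) ℝ)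
    (S : Fin 4 → Submodule ℝ (Fin N₂ × Fin N₁ → ℝ))
    (hS : S = ![(LinearMap.range U₂.mulVecLin).kron (LinearMap.range U₁.mulVecLin),
        (LinearMap.range U₂.mulVecLin).kron (LinearMap.ker U₁ᵀ.mulVecLin),
        (LinearMap.ker U₂ᵀ.mulVecLin).kron (LinearMap.range U₁.mulVecLin),
        (LinearMap.ker U₂ᵀ.mulVecLin).kron (LinearMap.ker U₁ᵀ.mulVecLin)]) :
    iSupIndep S ∧ (⨆ i, S i) = ⊤ := by
  set A := LinearMap.range U₂.mulVecLin with hA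
  set A' := LinearMap.ker U₂ᵀ.mulVecLin with hA'
  set B := LinearMap.range U₁.mulVecLin with hB
  set B' := LinearMap.ker U₁ᵀ.mulVecLin with hB'
  have hAA' : ∀ v ∈ A, ∀ v' ∈ A', v ⬝ᵥ v' = 0 := fun v hv v' hv' => dot_range_ker U₂ hv hv'
  have hA'A : ∀ v ∈ A', ∀ v' ∈ A, v ⬝ᵥ v' = 0 := fun v hv v' hv' => by
    rw [dotProduct_comm]; exact dot_range_ker U₂ hv' hv
  have hBB' : ∀ w ∈ B, ∀ w' ∈ B', w ⬝ᵥ w' = 0 := fun w hw w' hw' => dot_range_ker U₁ hw hw'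
  have hB'B : ∀ w ∈ B', ∀ w' ∈ B, w ⬝ᵥ w' = 0 := fun w hw w' hw' => by
    rw [dotProduct_comm]; exact dot_range_ker U₁ hw' hw
  -- pairwise orthogonality of the four pieces
  have hortho : ∀ i j : Fin 4, i ≠ j → ∀ x ∈ S i, ∀ y ∈ S j, x ⬝ᵥ y = 0 := by
    intro i j hij
    fin_cases i <;> fin_cases j <;> simp_all only [hS, ne_eq, not_true_eq_false,
      Matrix.cons_val_zero, Matrix.cons_val_one, Matrix.head_cons, Matrix.cons_val_two,
      Matrix.tail_cons, Matrix.cons_val_three] <;>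
    first
    | exact absurd rfl hij
    | exact kron_dot_zero _ _ _ _ (Or.inr hBB')
    | exact kron_dot_zero _ _ _ _ (Or.inr hB'B)
    | exact kron_dot_zero _ _ _ _ (Or.inl hAA')
    | exact kron_dot_zero _ _ _ _ (Or.inl hA'A)
  constructor
  · rw [iSupIndep_def]
    intro i
    rw [Submodule.disjoint_def]
    intro x hxi hxs
    have hdot : ∀ y ∈ ⨆ j, ⨆ (_ : j ≠ i), S j, x ⬝ᵥ y = 0 := by
      intro y hy
      let K : Submodule ℝ (Fin N₂ × Fin N₁ → ℝ) :=
        { carrier := {y | x ⬝ᵥ y = 0}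
          add_mem' := fun {a b} ha hb => by
            simp only [Set.mem_setOf_eq] at *
            rw [dotProduct_add, ha, hb, add_zero]
          zero_mem' := by simp [Set.mem_setOf_eq]
          smul_mem' := fun c a ha => by
            simp only [Set.mem_setOf_eq] at *
            rw [dotProduct_smul, ha, smul_zero] }
      have : (⨆ j, ⨆ (_ : j ≠ i), S j) ≤ K := by
        apply iSup_le; intro j; apply iSup_le; intro hj
        intro z hz
        exact hortho i j (Ne.symm hj) x hxi z hz
      exact this hy
    exact dotProduct_self_eq_zero.mp (hdot x hxs)
  · rw [eq_top_iff]
    intro x _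
    -- decompose along standard basis
    have hx : x = ∑ ji : Fin N₂ × Fin N₁, x ji • fun k => if ji = k then (1:ℝ) else 0 :=
      pi_eq_sum_univ x
    rw [hx]
    apply Submodule.sum_mem
    rintro ⟨j, i⟩ _
    apply Submodule.smul_mem
    -- the standard basis vector is a pure tensor of standard basis vectors
    obtain ⟨a, ha, a', ha', hae⟩ := Submodule.mem_sup.mp
      ((sup_range_ker U₂).symm ▸ Submodule.mem_top :
        (fun k => if j = k then (1:ℝ) else 0) ∈ A ⊔ A')
    obtain ⟨b, hb, b', hb', hbe⟩ := Submodule.mem_sup.mp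
      ((sup_range_ker U₁).symm ▸ Submodule.mem_top :
        (fun k => if i = k then (1:ℝ) else 0) ∈ B ⊔ B')
    have key : (fun k : Fin N₂ × Fin N₁ => if (j, i) = k then (1:ℝ) else 0)
        = (fun ji => a ji.1 * b ji.2) + (fun ji => a ji.1 * b' ji.2)
          + (fun ji => a' ji.1 * b ji.2) + (fun ji => a' ji.1 * b' ji.2) := by
      funext k
      have h1 : a k.1 + a' k.1 = if j = k.1 then (1:ℝ) else 0 := by
        simpa using congrFun hae k.1
      have h2 : b k.2 + b' k.2 = if i = k.2 then (1:ℝ) else 0 := by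
        simpa using congrFun hbe k.2
      have : (if (j, i) = k then (1:ℝ) else 0)
          = (if j = k.1 then (1:ℝ) else 0) * (if i = k.2 then (1:ℝ) else 0) := by
        by_cases h : (j, i) = k
        · subst h; simp
        · rw [if_neg h]
          have hh : j ≠ k.1 ∨ i ≠ k.2 := by
            by_contra hc
            push_neg at hc
            exact h (Prod.ext hc.1 hc.2)
          rcases hh with h' | h'
          · rw [if_neg h', zero_mul]
          · rw [if_neg h', mul_zero]
      simp only [Pi.add_apply, this, ← h1, ← h2]
      ring
    rw [key]
    have m0 : (fun ji : Fin N₂ × Fin N₁ => a ji.1 * b ji.2) ∈ ⨆ n, S n :=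
      le_iSup S 0 (by rw [hS]; exact mem_kron ha hb)
    have m1 : (fun ji : Fin N₂ × Fin N₁ => a ji.1 * b' ji.2) ∈ ⨆ n, S n :=
      le_iSup S 1 (by rw [hS]; exact mem_kron ha hb')
    have m2 : (fun ji : Fin N₂ × Fin N₁ => a' ji.1 * b ji.2) ∈ ⨆ n, S n :=
      le_iSup S 2 (by rw [hS]; exact mem_kron ha' hb)
    have m3 : (fun ji : Fin N₂ × Fin N₁ => a' ji.1 * b' ji.2) ∈ ⨆ n, S n :=
      le_iSup S 3 (by rw [hS]; exact mem_kron ha' hb')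
    exact Submodule.add_mem _ (Submodule.add_mem _ (Submodule.add_mem _ m0 m1) m2) m3
end

section
/- Fix natural numbers N₁, N₂, r₁ ≤ N₁, r₂ ≤ N₂, and matrices δ* : Matrix (Fin r₁) (Fin (N₁ - r₁)) ℝ and γ* : Matrix (Fin r₂) (Fin (N₂ - r₂)) ℝ. Let Ω be the 4 × 4 block matrix (with row-block index types (Fin (N₂-r₂) × Fin (N₁-r₁)) ⊕ (Fin r₂ × Fin (N₁-r₁)) ⊕ (Fin (N₂-r₂) × Fin r₁) ⊕ (Fin r₂ × Fin r₁) and column-block index types (Fin (N₂-r₂) × Fin (N₁-r₁)) ⊕ (Fin (N₂-r₂) × Fin r₁) ⊕ (Fin r₂ × Fin (N₁-r₁)) ⊕ (Fin r₂ × Fin r₁)) whose block rows are: [1, 1 ⊗ δ*ᵀ, γ*ᵀ ⊗ 1, γ*ᵀ ⊗ δ*ᵀ], [0, 0, 1, 1 ⊗ δ*ᵀ], [0, 1, 0, γ*ᵀ ⊗ 1], [0, 0, 0, 1], where each 1 is an identity matrix and each 0 a zero matrix of conformable dimensions. Then the determinant of Ω has absolute value one: |det Ω| = 1. -/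
open Matrix Kronecker

/-!
Swapping the two middle row blocks of Ω makes it block upper triangular with identity diagonal
blocks, so the reordered matrix has determinant `1`.
-/

def Equiv.sumSwapInner (α β γ δ : Type*) : α ⊕ β ⊕ γ ⊕ δ ≃ α ⊕ γ ⊕ β ⊕ δ :=
  Equiv.sumCongr (Equiv.refl _)
    (((Equiv.sumAssoc _ _ _).symm.trans
      ((Equiv.sumComm β γ).sumCongr (Equiv.refl δ))).trans
      (Equiv.sumAssoc _ _ _))

namespace Matrix

variable {R : Type*} [CommRing R] {a b c d : Type*}
  [DecidableEq a] [DecidableEq b] [DecidableEq c] [DecidableEq d]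

theorem submatrix_sumSwapInner_symm_fromBlocks (T : Matrix a (c ⊕ b ⊕ d) R)
    (S : Matrix b d R) (W : Matrix c d R) :
    (fromBlocks (1 : Matrix a a R) T 0
      (fromBlocks 0 (fromCols 1 S) (fromRows (1 : Matrix c c R) 0) (fromBlocks 0 W 0 1))).submatrix
        (Equiv.sumSwapInner a b c d).symm id =
      fromBlocks 1 T 0 (fromBlocks 1 (fromCols 0 W) 0 (fromBlocks 1 S 0 1)) := by
  ext (i | i | i | i) (j | j | j | j) <;>
    simp [Equiv.sumSwapInner, fromBlocks, fromCols]

theorem det_submatrix_sumSwapInner_symm_fromBlocks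
    [Fintype a] [Fintype b] [Fintype c] [Fintype d]
    (T : Matrix a (c ⊕ b ⊕ d) R) (S : Matrix b d R) (W : Matrix c d R) :
    ((fromBlocks (1 : Matrix a a R) T 0
      (fromBlocks 0 (fromCols 1 S) (fromRows (1 : Matrix c c R) 0) (fromBlocks 0 W 0 1))).submatrix
        (Equiv.sumSwapInner a b c d).symm id).det = 1 := by
  rw [submatrix_sumSwapInner_symm_fromBlocks, det_fromBlocks_zero₂₁, det_fromBlocks_zero₂₁,
    det_fromBlocks_zero₂₁]
  simp only [det_one, one_mul]

end Matrix

theorem stmt11_general {N₁ N₂ r₁ r₂ : ℕ}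
    (δs : Matrix (Fin r₁) (Fin (N₁ - r₁)) ℝ)
    (γs : Matrix (Fin r₂) (Fin (N₂ - r₂)) ℝ)
    (Ω : Matrix
      ((Fin (N₂ - r₂) × Fin (N₁ - r₁)) ⊕ (Fin r₂ × Fin (N₁ - r₁)) ⊕
        (Fin (N₂ - r₂) × Fin r₁) ⊕ (Fin r₂ × Fin r₁))
      ((Fin (N₂ - r₂) × Fin (N₁ - r₁)) ⊕ (Fin (N₂ - r₂) × Fin r₁) ⊕
        (Fin r₂ × Fin (N₁ - r₁)) ⊕ (Fin r₂ × Fin r₁)) ℝ)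
    (hΩ : Ω = Matrix.fromBlocks
      (1 : Matrix (Fin (N₂ - r₂) × Fin (N₁ - r₁)) (Fin (N₂ - r₂) × Fin (N₁ - r₁)) ℝ)
      (Matrix.fromCols
        ((1 : Matrix (Fin (N₂ - r₂)) (Fin (N₂ - r₂)) ℝ) ⊗ₖ δsᵀ)
        (Matrix.fromCols
          (γsᵀ ⊗ₖ (1 : Matrix (Fin (N₁ - r₁)) (Fin (N₁ - r₁)) ℝ))
          (γsᵀ ⊗ₖ δsᵀ)))
      0
      (Matrix.fromBlocks
        (0 : Matrix (Fin r₂ × Fin (N₁ - r₁)) (Fin (N₂ - r₂) × Fin r₁) ℝ)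
        (Matrix.fromCols
          (1 : Matrix (Fin r₂ × Fin (N₁ - r₁)) (Fin r₂ × Fin (N₁ - r₁)) ℝ)
          ((1 : Matrix (Fin r₂) (Fin r₂) ℝ) ⊗ₖ δsᵀ))
        (Matrix.fromRows
          (1 : Matrix (Fin (N₂ - r₂) × Fin r₁) (Fin (N₂ - r₂) × Fin r₁) ℝ)
          (0 : Matrix (Fin r₂ × Fin r₁) (Fin (N₂ - r₂) × Fin r₁) ℝ))
        (Matrix.fromBlocks
          (0 : Matrix (Fin (N₂ - r₂) × Fin r₁) (Fin r₂ × Fin (N₁ - r₁)) ℝ)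
          (γsᵀ ⊗ₖ (1 : Matrix (Fin r₁) (Fin r₁) ℝ))
          (0 : Matrix (Fin r₂ × Fin r₁) (Fin r₂ × Fin (N₁ - r₁)) ℝ)
          (1 : Matrix (Fin r₂ × Fin r₁) (Fin r₂ × Fin r₁) ℝ))))
    (e : ((Fin (N₂ - r₂) × Fin (N₁ - r₁)) ⊕ (Fin r₂ × Fin (N₁ - r₁)) ⊕
        (Fin (N₂ - r₂) × Fin r₁) ⊕ (Fin r₂ × Fin r₁)) ≃
      ((Fin (N₂ - r₂) × Fin (N₁ - r₁)) ⊕ (Fin (N₂ - r₂) × Fin r₁) ⊕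
        (Fin r₂ × Fin (N₁ - r₁)) ⊕ (Fin r₂ × Fin r₁)))
    (he : e = Equiv.sumCongr (Equiv.refl _)
      (((Equiv.sumAssoc _ _ _).symm.trans
        ((Equiv.sumComm (Fin r₂ × Fin (N₁ - r₁)) (Fin (N₂ - r₂) × Fin r₁)).sumCongr
          (Equiv.refl (Fin r₂ × Fin r₁)))).trans
        (Equiv.sumAssoc _ _ _))) :
    |(Ω.submatrix e.symm id).det| = 1 := by
  subst hΩ he
  exact (congrArg abs (det_submatrix_sumSwapInner_symm_fromBlocks _ _ _)).trans abs_one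

theorem stmt11 {N₁ N₂ r₁ r₂ : ℕ} (hr₁ : r₁ ≤ N₁) (hr₂ : r₂ ≤ N₂)
    (δs : Matrix (Fin r₁) (Fin (N₁ - r₁)) ℝ)
    (γs : Matrix (Fin r₂) (Fin (N₂ - r₂)) ℝ)
    (Ω : Matrix
      ((Fin (N₂ - r₂) × Fin (N₁ - r₁)) ⊕ (Fin r₂ × Fin (N₁ - r₁)) ⊕
        (Fin (N₂ - r₂) × Fin r₁) ⊕ (Fin r₂ × Fin r₁))
      ((Fin (N₂ - r₂) × Fin (N₁ - r₁)) ⊕ (Fin (N₂ - r₂) × Fin r₁) ⊕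
        (Fin r₂ × Fin (N₁ - r₁)) ⊕ (Fin r₂ × Fin r₁)) ℝ)
    (hΩ : Ω = Matrix.fromBlocks
      (1 : Matrix (Fin (N₂ - r₂) × Fin (N₁ - r₁)) (Fin (N₂ - r₂) × Fin (N₁ - r₁)) ℝ)
      (Matrix.fromCols
        ((1 : Matrix (Fin (N₂ - r₂)) (Fin (N₂ - r₂)) ℝ) ⊗ₖ δsᵀ)
        (Matrix.fromCols
          (γsᵀ ⊗ₖ (1 : Matrix (Fin (N₁ - r₁)) (Fin (N₁ - r₁)) ℝ))
          (γsᵀ ⊗ₖ δsᵀ)))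
      0
      (Matrix.fromBlocks
        (0 : Matrix (Fin r₂ × Fin (N₁ - r₁)) (Fin (N₂ - r₂) × Fin r₁) ℝ)
        (Matrix.fromCols
          (1 : Matrix (Fin r₂ × Fin (N₁ - r₁)) (Fin r₂ × Fin (N₁ - r₁)) ℝ)
          ((1 : Matrix (Fin r₂) (Fin r₂) ℝ) ⊗ₖ δsᵀ))
        (Matrix.fromRows
          (1 : Matrix (Fin (N₂ - r₂) × Fin r₁) (Fin (N₂ - r₂) × Fin r₁) ℝ)
          (0 : Matrix (Fin r₂ × Fin r₁) (Fin (N₂ - r₂) × Fin r₁) ℝ))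
        (Matrix.fromBlocks
          (0 : Matrix (Fin (N₂ - r₂) × Fin r₁) (Fin r₂ × Fin (N₁ - r₁)) ℝ)
          (γsᵀ ⊗ₖ (1 : Matrix (Fin r₁) (Fin r₁) ℝ))
          (0 : Matrix (Fin r₂ × Fin r₁) (Fin r₂ × Fin (N₁ - r₁)) ℝ)
          (1 : Matrix (Fin r₂ × Fin r₁) (Fin r₂ × Fin r₁) ℝ))))
    (e : ((Fin (N₂ - r₂) × Fin (N₁ - r₁)) ⊕ (Fin r₂ × Fin (N₁ - r₁)) ⊕
        (Fin (N₂ - r₂) × Fin r₁) ⊕ (Fin r₂ × Fin r₁)) ≃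
      ((Fin (N₂ - r₂) × Fin (N₁ - r₁)) ⊕ (Fin (N₂ - r₂) × Fin r₁) ⊕
        (Fin r₂ × Fin (N₁ - r₁)) ⊕ (Fin r₂ × Fin r₁)))
    (he : e = Equiv.sumCongr (Equiv.refl _)
      (((Equiv.sumAssoc _ _ _).symm.trans
        ((Equiv.sumComm (Fin r₂ × Fin (N₁ - r₁)) (Fin (N₂ - r₂) × Fin r₁)).sumCongr
          (Equiv.refl (Fin r₂ × Fin r₁)))).trans
        (Equiv.sumAssoc _ _ _))) :
    |(Ω.submatrix e.symm id).det| = 1 :=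
  stmt11_general δs γs Ω hΩ e he
end
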